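/- Define dp recursively on a binary matrix by dp(i,j) = 0 if M(i,j) = 0; dp(i,j) = 1 if M(i,j) = 1 and (i = 0 or j = 0); and dp(i,j) = min(dp(i-1,j), dp(i,j-1), dp(i-1,j-1)) + 1 otherwise. Then dp(i,j) equals the side length of the largest all-ones square whose bottom-right corner is (i,j). -/

import Mathlib

/-!
Write `S(i, j)` for the set of side lengths of all-ones squares with bottom-right corner `(i, j)`.
It always contains `0` and is closed downwards. Away from the first row and column, a square of
side `k + 1` at `(i, j)` is exactly the entry `(i, j)` together with three squares of side `k` at
`(i - 1, j)`, `(i, j - 1)` and `(i - 1, j - 1)`: these cover everything, and the diagonal one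
supplies the far corner. Hence the maximum of `S(i, j)` obeys the recursion defining `dp`, and
the theorem follows by induction on `i + j`.
-/

namespace Fin

variable {m : ℕ}

def truncSub (i : Fin m) (s : ℕ) : Fin m :=
  ⟨i.val - s, Nat.lt_of_le_of_lt (Nat.sub_le _ _) i.isLt⟩

@[simp]
theorem val_truncSub (i : Fin m) (s : ℕ) : (i.truncSub s).val = i.val - s := rfl

@[simp]
theorem truncSub_zero (i : Fin m) : i.truncSub 0 = i := Fin.ext (Nat.sub_zero _)

@[simp]
theorem truncSub_truncSub (i : Fin m) (s t : ℕ) :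
    (i.truncSub s).truncSub t = i.truncSub (s + t) :=
  Fin.ext (Nat.sub_sub _ _ _)

end Fin

open Fin

section OnesSquare

variable {m n : ℕ} (M : Fin m → Fin n → Bool)

def onesSquareSides (i : Fin m) (j : Fin n) : Set ℕ :=
  {k | k ≤ i.val + 1 ∧ k ≤ j.val + 1 ∧
    ∀ s < k, ∀ t < k, M (i.truncSub s) (j.truncSub t) = true}

variable {M}

theorem zero_mem_onesSquareSides (i : Fin m) (j : Fin n) : 0 ∈ onesSquareSides M i j :=
  ⟨Nat.zero_le _, Nat.zero_le _, fun _ hs => absurd hs (Nat.not_lt_zero _)⟩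

theorem mem_onesSquareSides_of_le {i : Fin m} {j : Fin n} {k l : ℕ}
    (hk : k ∈ onesSquareSides M i j) (hl : l ≤ k) : l ∈ onesSquareSides M i j :=
  ⟨hl.trans hk.1, hl.trans hk.2.1, fun s hs t ht => hk.2.2 s (hs.trans_le hl) t (ht.trans_le hl)⟩

theorem apply_eq_true_of_succ_mem_onesSquareSides {i : Fin m} {j : Fin n} {k : ℕ}
    (hk : k + 1 ∈ onesSquareSides M i j) : M i j = true := by
  simpa using hk.2.2 0 k.succ_pos 0 k.succ_pos

theorem succ_mem_onesSquareSides_iff {i : Fin m} {j : Fin n} (hi : 0 < i.val) (hj : 0 < j.val)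
    {k : ℕ} :
    k + 1 ∈ onesSquareSides M i j ↔
      M i j = true ∧ k ∈ onesSquareSides M (i.truncSub 1) j ∧
        k ∈ onesSquareSides M i (j.truncSub 1) ∧
          k ∈ onesSquareSides M (i.truncSub 1) (j.truncSub 1) := by
  constructor
  · intro hk
    obtain ⟨hki, hkj, hsq⟩ := hk
    refine ⟨apply_eq_true_of_succ_mem_onesSquareSides ⟨hki, hkj, hsq⟩,
      ⟨by simp only [val_truncSub]; omega, by omega, fun s hs t ht => ?_⟩,
      ⟨by omega, by simp only [val_truncSub]; omega, fun s hs t ht => ?_⟩,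
      ⟨by simp only [val_truncSub]; omega, by simp only [val_truncSub]; omega, fun s hs t ht => ?_⟩⟩
    · simpa [add_comm] using hsq (s + 1) (by omega) t (by omega)
    · simpa [add_comm] using hsq s (by omega) (t + 1) (by omega)
    · simpa [add_comm] using hsq (s + 1) (by omega) (t + 1) (by omega)
  · rintro ⟨hM, ⟨hki, -, hup⟩, ⟨-, hkj, hleft⟩, ⟨-, -, hdiag⟩⟩
    simp only [val_truncSub] at hki hkj
    refine ⟨by omega, by omega, fun s hs t ht => ?_⟩
    obtain _ | s := s <;> obtain _ | t := t
    · simpa using hM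
    · simpa [add_comm] using hleft 0 (by omega) t (by omega)
    · simpa [add_comm] using hup s (by omega) 0 (by omega)
    · simpa [add_comm] using hdiag s (by omega) t (by omega)

theorem isGreatest_onesSquareSides_of_eq_false {i : Fin m} {j : Fin n} (h : M i j = false) :
    IsGreatest (onesSquareSides M i j) 0 := by
  refine ⟨zero_mem_onesSquareSides i j, fun k hk => ?_⟩
  obtain _ | k := k
  · exact le_rfl
  · simp [apply_eq_true_of_succ_mem_onesSquareSides hk] at h

theorem isGreatest_onesSquareSides_of_edge {i : Fin m} {j : Fin n} (h : M i j = true)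
    (hij : i.val = 0 ∨ j.val = 0) : IsGreatest (onesSquareSides M i j) 1 := by
  refine ⟨⟨by omega, by omega, fun s hs t ht => ?_⟩, fun k hk => ?_⟩
  · obtain rfl : s = 0 := by omega
    obtain rfl : t = 0 := by omega
    simpa using h
  · have := hk.1
    have := hk.2.1
    omega

theorem isGreatest_onesSquareSides_of_interior {i : Fin m} {j : Fin n} (hi : 0 < i.val)
    (hj : 0 < j.val) (h : M i j = true) {a b c : ℕ}
    (ha : IsGreatest (onesSquareSides M (i.truncSub 1) j) a)
    (hb : IsGreatest (onesSquareSides M i (j.truncSub 1)) b)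
    (hc : IsGreatest (onesSquareSides M (i.truncSub 1) (j.truncSub 1)) c) :
    IsGreatest (onesSquareSides M i j) (min (min a b) c + 1) := by
  refine ⟨(succ_mem_onesSquareSides_iff hi hj).2 ⟨h, ?_, ?_, ?_⟩, fun k hk => ?_⟩
  · exact mem_onesSquareSides_of_le ha.1 (by omega)
  · exact mem_onesSquareSides_of_le hb.1 (by omega)
  · exact mem_onesSquareSides_of_le hc.1 (by omega)
  · obtain _ | k := k
    · omega
    · obtain ⟨-, hka, hkb, hkc⟩ := (succ_mem_onesSquareSides_iff hi hj).1 hk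
      have := ha.2 hka
      have := hb.2 hkb
      have := hc.2 hkc
      omega

end OnesSquare

theorem stmt5 {m n : ℕ} (M : Fin m → Fin n → Bool) (dp : Fin m → Fin n → ℕ)
    (hdp : ∀ (i : Fin m) (j : Fin n),
      dp i j =
        if M i j = false then 0
        else if i.val = 0 ∨ j.val = 0 then 1
        else
          min (min (dp ⟨i.val - 1, Nat.lt_of_le_of_lt (Nat.sub_le _ _) i.isLt⟩ j)
                   (dp i ⟨j.val - 1, Nat.lt_of_le_of_lt (Nat.sub_le _ _) j.isLt⟩))
              (dp ⟨i.val - 1, Nat.lt_of_le_of_lt (Nat.sub_le _ _) i.isLt⟩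
                  ⟨j.val - 1, Nat.lt_of_le_of_lt (Nat.sub_le _ _) j.isLt⟩) + 1) :
    ∀ (i : Fin m) (j : Fin n),
      IsGreatest {k : ℕ | k ≤ i.val + 1 ∧ k ≤ j.val + 1 ∧
        ∀ s < k, ∀ t < k,
          M ⟨i.val - s, Nat.lt_of_le_of_lt (Nat.sub_le _ _) i.isLt⟩
            ⟨j.val - t, Nat.lt_of_le_of_lt (Nat.sub_le _ _) j.isLt⟩ = true}
        (dp i j) := by
  suffices h : ∀ N (i : Fin m) (j : Fin n), i.val + j.val = N →
      IsGreatest (onesSquareSides M i j) (dp i j) from fun i j => h _ i j rfl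
  intro N
  induction N using Nat.strong_induction_on with
  | h N ih =>
  intro i j hN
  rw [hdp i j]
  split_ifs with hM hij
  · exact isGreatest_onesSquareSides_of_eq_false hM
  · exact isGreatest_onesSquareSides_of_edge (Bool.not_eq_false _ ▸ hM) hij
  obtain ⟨hi, hj⟩ := not_or.1 hij
  exact isGreatest_onesSquareSides_of_interior (Nat.pos_of_ne_zero hi) (Nat.pos_of_ne_zero hj)
    (Bool.not_eq_false _ ▸ hM)
    (ih _ (by simp only [val_truncSub]; omega) _ _ rfl) (ih _ (by simp only [val_truncSub]; omega) _ _ rfl) (ih _ (by simp only [val_truncSub]; omega) _ _ rfl)
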